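/- Let R ∈ ℤ^m and S ∈ ℤ^n be nonnegative integer vectors with equal component sums, every component of R at most n and every component of S at most m. There exists an m×n (0,1)-matrix A with row sum vector R and column sum vector S satisfying r_0 A = A if and only if (a) R is palindromic, (b) if m is even then every component of S is even, and if m is odd then r_⌈m/2⌉ ≥ o(S), and (c) S̄ ⪯ R̄*, where S̄ is obtained from S by subtracting one from every odd component, and R̄ equals R if m is even and equals R with its middle component r_⌈m/2⌉ removed if m is odd. -/

import Mathlib

/-- The multiset of components of a vector. -/
def vecMS {n : ℕ} (v : Fin n → ℕ) : Multiset ℕ := Multiset.map v Finset.univ.val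

/-- The sum of the `k` largest elements of a multiset of natural numbers. -/
def topSum (M : Multiset ℕ) (k : ℕ) : ℕ := ((M.sort (· ≤ ·)).reverse.take k).sum

/-- `MajorizedBy S R` means `S ⪯ R`: the component sums agree and every
partial sum of the weakly decreasing rearrangement of `R` dominates the
corresponding partial sum for `S`. -/
def MajorizedBy (S R : Multiset ℕ) : Prop := S.sum = R.sum ∧ ∀ k, topSum S k ≤ topSum R k

/-- The conjugate `R*` of (the weakly decreasing rearrangement of) `R`,
viewed as an integer partition. -/
def conjMS (M : Multiset ℕ) : Multiset ℕ :=
  (Multiset.range M.sum).map fun j => (M.filter (fun x => j + 1 ≤ x)).card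

/-!
Rows `i` and `r₀ i` of a symmetric matrix coincide, so it is determined by its top `⌊m/2⌋` rows
`B` and, for odd `m`, its middle row. Each column sum `s_j` is twice the column sum of `B` plus
the middle entry, so the middle row must be `s_j mod 2` and `B` must have row sums
`r_1, …, r_⌊m/2⌋` and column sums `⌊s_j/2⌋`. By the Gale–Ryser theorem such a `B` exists iff
`⌊S/2⌋ ⪯ (r_1, …, r_⌊m/2⌋)*`; since `R̄` is two copies of that half of `R`, doubling both sides
turns this into (c), and comparing total sums shows that the middle row sum is `o(S)`, which
gives (b). Gale–Ryser sufficiency is proved by induction on the number of columns, putting the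
ones of the first column into the rows with the largest sums.
-/

open Finset

theorem List.sum_take_succ_le {l : List ℕ} {c : ℕ} (hl : ∀ x ∈ l, x ≤ c) (k : ℕ) :
    (l.take (k + 1)).sum ≤ c + (l.take k).sum := by
  induction l generalizing k with
  | nil => simp
  | cons x l ih =>
    cases k with
    | zero => simpa using hl x List.mem_cons_self
    | succ k =>
      have := ih (fun y hy => hl y (List.mem_cons_of_mem _ hy)) k
      simp only [List.take_succ_cons, List.sum_cons]
      omega

theorem List.sum_le_sum_take_of_subperm {L l : List ℕ} (hL : L.Pairwise (· ≥ ·))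
    (hl : l.Subperm L) : l.sum ≤ (L.take l.length).sum := by
  induction L generalizing l with
  | nil => simp [List.subperm_nil.1 hl]
  | cons a L ih =>
    obtain ⟨ha, hL⟩ := List.pairwise_cons.1 hL
    have hsub : (l.erase a).Subperm L := by simpa using hl.erase a
    by_cases hal : a ∈ l
    · have hlen : l.length = (l.erase a).length + 1 := by
        rw [List.length_erase_of_mem hal]; have := List.length_pos_of_mem hal; omega
      rw [← List.sum_erase hal, hlen, List.take_succ_cons, List.sum_cons]
      exact Nat.add_le_add_left (ih hL hsub) a
    · rw [List.erase_of_not_mem hal] at hsub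
      refine (ih hL hsub).trans ?_
      cases hk : l.length with
      | zero => simp
      | succ k =>
        rw [List.take_succ_cons, List.sum_cons]
        exact List.sum_take_succ_le ha k

theorem Multiset.exists_le_map_eq {α β : Type*} [DecidableEq β] {f : α → β} {s : Multiset α}
    {N : Multiset β} (h : N ≤ s.map f) : ∃ t ≤ s, t.map f = N := by
  induction s using Multiset.induction generalizing N with
  | empty => exact ⟨0, le_rfl, (Multiset.le_zero.1 h).symm⟩
  | cons a s ih =>
    rw [Multiset.map_cons] at h
    by_cases ha : f a ∈ N
    · obtain ⟨t, ht, htN⟩ := ih (Multiset.erase_le_iff_le_cons.2 h)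
      refine ⟨a ::ₘ t, Multiset.cons_le_cons a ht, ?_⟩
      rw [Multiset.map_cons, htN, Multiset.cons_erase ha]
    · obtain ⟨t, ht, htN⟩ := ih ((Multiset.le_cons_of_notMem ha).1 h)
      exact ⟨t, ht.trans (Multiset.le_cons_self s a), htN⟩

theorem topSum_eq_of_pairwise {M : Multiset ℕ} {l : List ℕ} (hl : l.Pairwise (· ≥ ·))
    (hM : (l : Multiset ℕ) = M) (k : ℕ) : topSum M k = (l.take k).sum := by
  have hsort : (M.sort (· ≤ ·)).reverse = l := by
    refine List.Perm.eq_of_pairwise' (r := (· ≥ ·)) ?_ hl ?_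
    · exact List.pairwise_reverse.2 (Multiset.pairwise_sort _ _)
    · rw [← Multiset.coe_eq_coe, Multiset.coe_reverse, Multiset.sort_eq, hM]
  rw [topSum, hsort]

theorem topSum_eq_sort (M : Multiset ℕ) (k : ℕ) :
    topSum M k = ((M.sort (· ≥ ·)).take k).sum :=
  topSum_eq_of_pairwise (Multiset.pairwise_sort _ _) (Multiset.sort_eq _ _) k

theorem topSum_map_mul_left (M : Multiset ℕ) (c k : ℕ) :
    topSum (M.map (c * ·)) k = c * topSum M k := by
  rw [topSum_eq_of_pairwise (l := (M.sort (fun a b : ℕ => a ≥ b)).map (c * ·)), topSum_eq_sort,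
    ← List.map_take, List.sum_map_mul_left, List.map_id']
  · exact (Multiset.pairwise_sort M (· ≥ ·)).map _ fun a b h => Nat.mul_le_mul_left c h
  · rw [← Multiset.map_coe, Multiset.sort_eq]

theorem sum_le_topSum_card {N M : Multiset ℕ} (h : N ≤ M) :
    N.sum ≤ topSum M (Multiset.card N) := by
  induction N using Quotient.inductionOn with
  | h l =>
    rw [topSum_eq_sort]
    refine List.sum_le_sum_take_of_subperm (Multiset.pairwise_sort _ _) ?_
    rw [← Multiset.coe_le, Multiset.sort_eq]
    exact h

theorem exists_le_card_le_sum_eq_topSum (M : Multiset ℕ) (k : ℕ) :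
    ∃ N ≤ M, Multiset.card N ≤ k ∧ N.sum = topSum M k := by
  refine ⟨((M.sort (· ≥ ·)).take k : List ℕ), ?_, by simp, by rw [topSum_eq_sort]; rfl⟩
  conv_rhs => rw [← Multiset.sort_eq M (· ≥ ·)]
  exact Multiset.coe_le.2 (List.take_sublist _ _).subperm

theorem sum_map_min_succ (M : Multiset ℕ) (k : ℕ) :
    (M.map (min · (k + 1))).sum = (M.map (min · k)).sum + (M.filter (k + 1 ≤ ·)).card := by
  induction M using Multiset.induction with
  | empty => simp
  | cons a s ih =>
    simp only [Multiset.map_cons, Multiset.sum_cons, Multiset.filter_cons, ih]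
    split_ifs <;> simp only [Multiset.card_add, Multiset.card_singleton, Multiset.card_zero] <;>
      omega

theorem sum_range_card_filter (M : Multiset ℕ) (k : ℕ) :
    ∑ j ∈ range k, (M.filter (j + 1 ≤ ·)).card = (M.map (min · k)).sum := by
  induction k with
  | zero => simp
  | succ k ih => rw [sum_range_succ, ih, sum_map_min_succ]

theorem sum_map_min_of_sum_le {M : Multiset ℕ} {k : ℕ} (hk : M.sum ≤ k) :
    (M.map (min · k)).sum = M.sum := by
  conv_rhs => rw [← Multiset.map_id M]
  exact congrArg Multiset.sum <| Multiset.map_congr rfl fun x hx =>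
    min_eq_left ((Multiset.le_sum_of_mem hx).trans hk)

theorem sum_conjMS (M : Multiset ℕ) : (conjMS M).sum = M.sum :=
  (sum_range_card_filter M M.sum).trans (sum_map_min_of_sum_le le_rfl)

theorem topSum_conjMS (M : Multiset ℕ) (k : ℕ) :
    topSum (conjMS M) k = (M.map (min · k)).sum := by
  have hanti :
      ((List.range M.sum).map fun j => (M.filter (j + 1 ≤ ·)).card).Pairwise (· ≥ ·) :=
    List.pairwise_map.2 <| List.pairwise_lt_range.imp fun hij =>
      Multiset.card_le_card <| Multiset.monotone_filter_right _ fun x hx => by omega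
  rw [topSum_eq_of_pairwise (M := conjMS M) hanti rfl, ← List.map_take, List.take_range]
  change ∑ j ∈ range (min k M.sum), _ = _
  rw [sum_range_card_filter]
  exact congrArg Multiset.sum <| Multiset.map_congr rfl fun x hx => by
    have := Multiset.le_sum_of_mem hx
    omega

theorem majorizedBy_conjMS_iff {N M : Multiset ℕ} :
    MajorizedBy N (conjMS M) ↔
      N.sum = M.sum ∧ ∀ k, topSum N k ≤ (M.map (min · k)).sum := by
  simp only [MajorizedBy, sum_conjMS, topSum_conjMS]

theorem vecMS_comp {n : ℕ} (g : ℕ → ℕ) (T : Fin n → ℕ) :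
    vecMS (g ∘ T) = (vecMS T).map g :=
  (Multiset.map_map g T _).symm

theorem sum_vecMS {n : ℕ} (T : Fin n → ℕ) : (vecMS T).sum = ∑ j, T j := rfl

theorem sum_le_topSum_vecMS {n : ℕ} (T : Fin n → ℕ) (K : Finset (Fin n)) :
    ∑ j ∈ K, T j ≤ topSum (vecMS T) #K := by
  have := sum_le_topSum_card (Multiset.map_le_map (f := T) (Finset.val_le_iff.2 K.subset_univ))
  rwa [Multiset.card_map] at this

theorem exists_card_le_topSum_vecMS_eq {n : ℕ} (T : Fin n → ℕ) (k : ℕ) :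
    ∃ K : Finset (Fin n), #K ≤ k ∧ topSum (vecMS T) k = ∑ j ∈ K, T j := by
  obtain ⟨N, hN, hcard, hsum⟩ := exists_le_card_le_sum_eq_topSum (vecMS T) k
  obtain ⟨t, ht, rfl⟩ := Multiset.exists_le_map_eq hN
  exact ⟨⟨t, Multiset.nodup_of_le ht univ.nodup⟩, by simpa using hcard, hsum.symm⟩

theorem forall_topSum_vecMS_le_iff {n : ℕ} (T : Fin n → ℕ) {f : ℕ → ℕ} (hf : Monotone f) :
    (∀ k, topSum (vecMS T) k ≤ f k) ↔ ∀ K : Finset (Fin n), ∑ j ∈ K, T j ≤ f #K := by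
  refine ⟨fun h K => (sum_le_topSum_vecMS T K).trans (h _), fun h k => ?_⟩
  obtain ⟨K, hK, hsum⟩ := exists_card_le_topSum_vecMS_eq T k
  exact hsum ▸ (h K).trans (hf hK)

def IsTopSet {ι α : Type*} [LE α] (f : ι → α) (I : Finset ι) : Prop :=
  ∀ i ∈ I, ∀ j ∉ I, f j ≤ f i

theorem exists_isTopSet_card_eq {ι α : Type*} [Fintype ι] [DecidableEq ι] [LinearOrder α]
    (f : ι → α) {t : ℕ} (ht : t ≤ Fintype.card ι) : ∃ I, IsTopSet f I ∧ #I = t := by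
  induction t with
  | zero => exact ⟨∅, by simp [IsTopSet], rfl⟩
  | succ t ih =>
    obtain ⟨I, hI, hcard⟩ := ih (by omega)
    have hne : Iᶜ.Nonempty := by
      rw [← card_pos, card_compl]; omega
    obtain ⟨i₀, hi₀, hmax⟩ := exists_max_image Iᶜ f hne
    rw [mem_compl] at hi₀
    refine ⟨insert i₀ I, fun i hi j hj => ?_, by rw [card_insert_of_notMem hi₀, hcard]⟩
    rw [mem_insert, not_or] at hj
    rcases mem_insert.1 hi with rfl | hi
    · exact hmax j (mem_compl.2 hj.2)
    · exact hI i hi j hj.2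

theorem IsTopSet.forall_lt_or_forall_le {ι α : Type*} [LinearOrder α] {f : ι → α}
    {I : Finset ι} (hI : IsTopSet f I) (a : α) :
    (∀ i ∈ I, a < f i) ∨ ∀ j ∉ I, f j ≤ a := by
  by_contra! h
  obtain ⟨⟨i, hi, hia⟩, j, hj, haj⟩ := h
  exact (hI i hi j hj).not_gt (hia.trans_lt haj)

section GaleRyser

variable {ι κ : Type*} [Fintype ι] [Fintype κ]

def ZeroOneRealizable (R : ι → ℕ) (T : κ → ℕ) : Prop :=
  ∃ B : Matrix ι κ ℕ,
    (∀ i j, B i j = 0 ∨ B i j = 1) ∧ (∀ i, ∑ j, B i j = R i) ∧ ∀ j, ∑ i, B i j = T j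

def GaleRyserCondition (R : ι → ℕ) (T : κ → ℕ) : Prop :=
  ∑ i, R i = ∑ j, T j ∧ ∀ K : Finset κ, ∑ j ∈ K, T j ≤ ∑ i, min (R i) #K

theorem ZeroOneRealizable.galeRyserCondition {R : ι → ℕ} {T : κ → ℕ}
    (h : ZeroOneRealizable R T) : GaleRyserCondition R T := by
  obtain ⟨B, h01, hrow, hcol⟩ := h
  refine ⟨?_, fun K => ?_⟩
  · simp_rw [← hrow, ← hcol]
    exact sum_comm
  calc ∑ j ∈ K, T j = ∑ i, ∑ j ∈ K, B i j := by simp_rw [← hcol]; exact sum_comm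
    _ ≤ ∑ i, min (R i) #K := sum_le_sum fun i _ => le_min
        (hrow i ▸ sum_le_sum_of_subset K.subset_univ)
        (card_eq_sum_ones K ▸ sum_le_sum fun j _ => by rcases h01 i j with h | h <;> omega)

theorem sum_min_one (R : ι → ℕ) : ∑ i, min (R i) 1 = #{i | 0 < R i} := by
  rw [card_filter]
  exact sum_congr rfl fun i _ => by split_ifs <;> omega

variable [DecidableEq ι]

section Step

variable {n : ℕ} {R : ι → ℕ} {T : Fin (n + 1) → ℕ}

theorem GaleRyserCondition.exists_isTopSet (h : GaleRyserCondition R T) :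
    ∃ I, IsTopSet R I ∧ #I = T 0 ∧ ∀ i ∈ I, 0 < R i := by
  have hpos : T 0 ≤ #{i | 0 < R i} := by simpa [sum_min_one] using h.2 {0}
  obtain ⟨I, hI, hcard⟩ := exists_isTopSet_card_eq R (hpos.trans (card_le_univ _))
  refine ⟨I, hI, hcard, ?_⟩
  rcases hI.forall_lt_or_forall_le 0 with hI0 | hI0
  · exact hI0
  have hsub : ({i | 0 < R i} : Finset ι) ⊆ I := fun i hi => by
    by_contra hiI
    exact (mem_filter.1 hi).2.ne' (Nat.le_zero.1 (hI0 i hiI))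
  intro i hi
  rw [← eq_of_subset_of_card_le hsub (hcard ▸ hpos)] at hi
  exact (mem_filter.1 hi).2

theorem GaleRyserCondition.tail (h : GaleRyserCondition R T) {I : Finset ι} (hI : IsTopSet R I)
    (hcard : #I = T 0) (hpos : ∀ i ∈ I, 0 < R i) :
    GaleRyserCondition (fun i => R i - if i ∈ I then 1 else 0) (Fin.tail T) := by
  have hind : ∑ i, (if i ∈ I then 1 else 0) = T 0 := by simp [hcard]
  have hsplit : ∀ i, R i - (if i ∈ I then 1 else 0) + (if i ∈ I then 1 else 0) = R i :=
    fun i => Nat.sub_add_cancel (by split_ifs with hi; exacts [hpos i hi, Nat.zero_le _])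
  refine ⟨?_, fun K => ?_⟩
  · have := h.1
    rw [Fin.sum_univ_succ, ← hind, ← sum_congr rfl fun i _ => hsplit i, sum_add_distrib] at this
    simp only [Fin.tail] at this ⊢
    omega
  have hK : ∑ j ∈ K, Fin.tail T j = ∑ j ∈ K.map (Fin.succEmb n), T j := by simp [Fin.tail]
  rcases hI.forall_lt_or_forall_le #K with hlt | hle
  · -- rows of `I` exceed `#K`, so removing one of their ones does not change `min · #K`
    have := h.2 (K.map (Fin.succEmb n))
    rw [card_map, ← hK] at this
    refine this.trans (sum_le_sum fun i _ => ?_)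
    show min (R i) #K ≤ min (R i - if i ∈ I then 1 else 0) #K
    by_cases hi : i ∈ I
    · simp only [hi, if_true]; have := hlt i hi; omega
    · simp [hi]
  · -- rows outside `I` are at most `#K`, so column `0` can be added to `K`
    have := h.2 (insert 0 (K.map (Fin.succEmb n)))
    rw [sum_insert (by simp), card_insert_of_notMem (by simp), card_map, ← hK] at this
    have hpt : ∀ i, min (R i) (#K + 1)
        = min (R i - if i ∈ I then 1 else 0) #K + if i ∈ I then 1 else 0 := fun i => by
      by_cases hi : i ∈ I
      · simp only [hi, if_true]; have := hpos i hi; omega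
      · simp only [hi, if_false]; have := hle i hi; omega
    rw [sum_congr rfl fun i _ => hpt i, sum_add_distrib, hind] at this
    show _ ≤ ∑ i, min (R i - if i ∈ I then 1 else 0) #K
    omega

end Step

theorem GaleRyserCondition.zeroOneRealizable {n : ℕ} {R : ι → ℕ} {T : Fin n → ℕ}
    (h : GaleRyserCondition R T) : ZeroOneRealizable R T := by
  induction n generalizing R with
  | zero =>
    have hR : ∑ i, R i = 0 := by simpa using h.1
    refine ⟨0, fun _ _ => Or.inl rfl, fun i => ?_, fun j => j.elim0⟩
    simp [(sum_eq_zero_iff.1 hR) i (mem_univ i)]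
  | succ n ih =>
    obtain ⟨I, hI, hcard, hpos⟩ := h.exists_isTopSet
    obtain ⟨B, h01, hrow, hcol⟩ := ih (h.tail hI hcard hpos)
    refine ⟨fun i => Fin.cons (if i ∈ I then 1 else 0) (B i), fun i j => ?_, fun i => ?_,
      fun j => ?_⟩
    · cases j using Fin.cases <;> simp [h01, em']
    · rw [Fin.sum_univ_succ]
      by_cases hi : i ∈ I
      · simp only [hi, ↓reduceIte, Fin.cons_zero, Fin.cons_succ, hrow]
        have := hpos i hi
        omega
      · simp [hi, hrow]
    · cases j using Fin.cases
      · simp [hcard]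
      · simp [hcol, Fin.tail]

end GaleRyser

section Mirror

variable {m : ℕ}

def centerTerm {M : Type*} [Zero M] (f : Fin m → M) : M :=
  if h : m % 2 = 1 then f ⟨m / 2, by omega⟩ else 0

theorem centerTerm_le_one {f : Fin m → ℕ} (hf : ∀ i, f i = 0 ∨ f i = 1) :
    centerTerm f ≤ 1 := by
  unfold centerTerm
  split_ifs
  · rcases hf ⟨m / 2, by omega⟩ with h | h <;> omega
  · exact zero_le_one

def topHalf {α : Type*} (f : Fin m → α) : Fin (m / 2) → α :=
  fun i => f (i.castLE (Nat.div_le_self m 2))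

theorem sum_eq_two_nsmul_sum_topHalf_add_centerTerm {M : Type*} [AddCommMonoid M]
    (f : Fin m → M) (hf : ∀ i, f i = f i.rev) :
    ∑ i, f i = 2 • ∑ i, topHalf f i + centerTerm f := by
  set p := m / 2
  set g : ℕ → M := fun i => if h : i < m then f ⟨i, h⟩ else 0
  have hg : ∀ {k} (i : Fin k) (hk : k ≤ m), f (i.castLE hk) = g i := fun i hk => by
    simp only [i.2.trans_le hk, ↓reduceDIte, g]; rfl
  have hsum : ∀ {k} (hk : k ≤ m), ∑ i : Fin k, f (i.castLE hk) = ∑ i ∈ range k, g i :=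
    fun hk => by simp_rw [hg _ hk]; exact Fin.sum_univ_eq_sum_range g _
  have hupper : ∑ i ∈ range p, g (p + (m % 2 + i)) = ∑ i ∈ range p, g i := by
    rw [← sum_range_reflect]
    refine sum_congr rfl fun i hi => ?_
    have hi : i < p := mem_range.1 hi
    simp only [g, dif_pos (show i < m by omega),
      dif_pos (show p + (m % 2 + (p - 1 - i)) < m by omega), hf ⟨i, _⟩]
    congr 1; ext; simp only [Fin.val_rev]; omega
  have hcenter : ∑ i ∈ range (m % 2), g (p + i) = centerTerm f := by
    rcases Nat.mod_two_eq_zero_or_one m with h | h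
    · simp [centerTerm, h]
    · simp [centerTerm, h, g, show p < m by omega, p]
  calc ∑ i, f i = ∑ i ∈ range (p + (m % 2 + p)), g i := by
        rw [show p + (m % 2 + p) = m by omega]; exact hsum le_rfl
    _ = ∑ i ∈ range p, g i + ∑ i ∈ range p, g i + centerTerm f := by
        rw [sum_range_add, sum_range_add, hupper, hcenter, add_comm (centerTerm f), add_assoc]
    _ = 2 • ∑ i, topHalf f i + centerTerm f := by rw [two_nsmul, ← hsum]; rfl

-- Rows `i` and `i.rev` both copy row `min i i.rev` of `B`; only the middle row of odd `m` is `c`.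
def mirror {α : Type*} (B : Fin (m / 2) → α) (c : α) (i : Fin m) : α :=
  if h : min (i : ℕ) i.rev < m / 2 then B ⟨_, h⟩ else c

variable {α β : Type*} (B : Fin (m / 2) → α) (c : α)

theorem mirror_rev (i : Fin m) : mirror B c i = mirror B c i.rev := by
  unfold mirror
  rw [Fin.rev_rev, min_comm (i : ℕ)]

theorem topHalf_mirror : topHalf (mirror B c : Fin m → α) = B := by
  funext i
  have := i.2
  have hmin : min (i : ℕ) (m - (i + 1)) = i := by omega
  simp [topHalf, mirror, Fin.val_rev, hmin]

theorem centerTerm_mirror [Zero α] :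
    centerTerm (mirror B c : Fin m → α) = if m % 2 = 1 then c else 0 := by
  unfold centerTerm
  split_ifs with hm
  · have hmid : min (m / 2) (m - (m / 2 + 1)) = m / 2 := by omega
    simp [mirror, Fin.val_rev, hmid]
  · rfl

theorem apply_mirror (g : α → β) (i : Fin m) : g (mirror B c i) = mirror (g ∘ B) (g c) i := by
  unfold mirror
  split_ifs <;> rfl

theorem mirror_mem {s : Set α} (hB : ∀ k, B k ∈ s) (hc : c ∈ s) (i : Fin m) :
    mirror B c i ∈ s := by
  unfold mirror
  split_ifs
  exacts [hB _, hc]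

theorem mirror_topHalf {f : Fin m → α} (hf : ∀ i, f i = f i.rev)
    (hc : ∀ h : m % 2 = 1, f ⟨m / 2, by omega⟩ = c) : mirror (topHalf f) c = f := by
  funext i
  have := i.2
  unfold mirror topHalf
  split_ifs with h
  · rcases min_choice (i : ℕ) i.rev with h' | h'
    · congr 1; ext; simpa using h'
    · rw [hf i]; congr 1; ext; simpa using h'
  · simp only [Fin.val_rev] at h
    rw [← hc (by omega)]
    congr 1; ext; simp only; omega

end Mirror

section SymmetricMatrix

variable {m n : ℕ} {R : Fin m → ℕ} {S : Fin n → ℕ}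

theorem sum_map_eraseCenter (hpal : ∀ i, R i = R i.rev) (g : ℕ → ℕ) :
    ((if hm : m % 2 = 1 then (vecMS R).erase (R ⟨m / 2, by omega⟩) else vecMS R).map g).sum
      = 2 * ∑ i, g (topHalf R i) := by
  have h : ∑ i, g (R i) = 2 • ∑ i, g (topHalf R i) + centerTerm (g ∘ R) :=
    sum_eq_two_nsmul_sum_topHalf_add_centerTerm (g ∘ R) fun i => congrArg g (hpal i)
  have hvec : ((vecMS R).map g).sum = ∑ i, g (R i) := by rw [← vecMS_comp]; rfl
  rw [smul_eq_mul, ← hvec] at h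
  split_ifs with hm
  · have hmem : R ⟨m / 2, by omega⟩ ∈ vecMS R :=
      Multiset.mem_map_of_mem R (mem_univ_val _)
    have := Multiset.sum_map_erase (f := g) hmem
    rw [h, centerTerm, dif_pos hm] at this
    exact Nat.add_left_cancel (this.trans (add_comm _ _))
  · rw [h, centerTerm, dif_neg hm, add_zero]

theorem majorizedBy_iff_galeRyserCondition (hpal : ∀ i, R i = R i.rev) :
    MajorizedBy (vecMS fun j => S j - S j % 2)
        (conjMS (if hm : m % 2 = 1 then (vecMS R).erase (R ⟨m / 2, by omega⟩) else vecMS R)) ↔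
      GaleRyserCondition (topHalf R) fun j => S j / 2 := by
  have hS : (vecMS fun j => S j - S j % 2) = (vecMS fun j => S j / 2).map (2 * ·) := by
    rw [← vecMS_comp]; congr; funext j; simp only [Function.comp]; omega
  have hsum := sum_map_eraseCenter hpal id
  simp only [id_eq, Multiset.map_id'] at hsum
  have hmono : Monotone fun k => ∑ i, min (topHalf R i) k :=
    fun a b hab => sum_le_sum fun i _ => min_le_min_left _ hab
  rw [majorizedBy_conjMS_iff, hS, Multiset.sum_map_mul_left, Multiset.map_id', sum_vecMS, hsum]
  simp only [topSum_map_mul_left, sum_map_eraseCenter hpal, GaleRyserCondition]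
  refine and_congr (by omega) ?_
  exact (forall_congr' fun k => Nat.mul_le_mul_left_iff two_pos).trans
    (forall_topSum_vecMS_le_iff _ hmono)

theorem sum_mod_two_eq_centerTerm (hpal : ∀ i, R i = R i.rev) (hsum : ∑ i, R i = ∑ j, S j)
    (hhalf : ∑ i, topHalf R i = ∑ j, S j / 2) : ∑ j, S j % 2 = centerTerm R := by
  have hR := sum_eq_two_nsmul_sum_topHalf_add_centerTerm R hpal
  have hS : ∑ j, S j = 2 * ∑ j, S j / 2 + ∑ j, S j % 2 := by
    rw [mul_sum, ← sum_add_distrib]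
    exact sum_congr rfl fun j _ => (Nat.div_add_mod _ _).symm
  rw [smul_eq_mul] at hR
  omega

theorem zeroOneRealizable_topHalf_of_symmetric {A : Matrix (Fin m) (Fin n) ℕ}
    (h01 : ∀ i j, A i j = 0 ∨ A i j = 1) (hrow : ∀ i, ∑ j, A i j = R i)
    (hcol : ∀ j, ∑ i, A i j = S j) (hsym : ∀ i j, A i j = A i.rev j) :
    ZeroOneRealizable (topHalf R) fun j => S j / 2 := by
  refine ⟨topHalf A, fun i j => h01 _ j, fun i => hrow _, fun j => ?_⟩
  have h := sum_eq_two_nsmul_sum_topHalf_add_centerTerm (fun i => A i j) fun i => hsym i j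
  have := centerTerm_le_one fun i => h01 i j
  rw [hcol, smul_eq_mul] at h
  change ∑ i, topHalf (fun i => A i j) i = S j / 2
  omega

theorem exists_symmetric_of_zeroOneRealizable_topHalf (hpal : ∀ i, R i = R i.rev)
    (hhalf : ZeroOneRealizable (topHalf R) fun j => S j / 2)
    (hodd : ∑ j, S j % 2 = centerTerm R) :
    ∃ A : Matrix (Fin m) (Fin n) ℕ, (∀ i j, A i j = 0 ∨ A i j = 1) ∧
      (∀ i, ∑ j, A i j = R i) ∧ (∀ j, ∑ i, A i j = S j) ∧
      ∀ i j, A i j = A i.rev j := by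
  obtain ⟨B, h01, hrow, hcol⟩ := hhalf
  beta_reduce at hcol
  set c : Fin n → ℕ := fun j => S j % 2
  refine ⟨mirror B c, fun i => mirror_mem (s := {r | ∀ j, r j = 0 ∨ r j = 1}) B c h01
    (fun j => Nat.mod_two_eq_zero_or_one _) i, fun i => ?_, fun j => ?_,
    fun i j => congrFun (mirror_rev B c i) j⟩
  · have hrowB : (fun r => ∑ j, r j) ∘ B = topHalf R := funext hrow
    rw [apply_mirror B c (fun r => ∑ j, r j), hrowB, mirror_topHalf _ hpal]
    intro hm
    rw [hodd, centerTerm, dif_pos hm]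
  · have hcolj : (fun i => mirror B c i j) = mirror (fun k => B k j) (c j) :=
      funext fun i => apply_mirror B c (fun r => r j) i
    rw [sum_eq_two_nsmul_sum_topHalf_add_centerTerm _ fun i => congrFun (mirror_rev B c i) j, hcolj,
      topHalf_mirror, centerTerm_mirror, smul_eq_mul, hcol]
    split_ifs with hm
    · exact Nat.div_add_mod _ _
    · have : c j = 0 := sum_eq_zero_iff.1 (hodd.trans (dif_neg hm)) j (mem_univ j)
      simp only [c] at this
      omega

theorem parity_conditions_of_sum_mod_two_eq_centerTerm (hodd : ∑ j, S j % 2 = centerTerm R) :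
    (m % 2 = 0 → ∀ j, S j % 2 = 0) ∧
      (univ.filter fun j => S j % 2 = 1).card = centerTerm R := by
  refine ⟨fun hm j => sum_eq_zero_iff.1 (hodd.trans (dif_neg (by omega))) j (mem_univ j),
    Eq.trans ?_ hodd⟩
  rw [card_filter]
  exact sum_congr rfl fun j _ => by split_ifs <;> omega

end SymmetricMatrix

/-- **(0,1)-matrices with horizontal-mirror symmetry (`r_0`).**
`𝒜^0(R,S) ≠ ∅` iff (a) `R` is palindromic, (b) if `m` is even then `S` is
even, and if `m` is odd then `r_{⌈m/2⌉} ≥ o(S)`, and (c) `S̄ ⪯ R̄*`, where `S̄`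
subtracts one from every odd component of `S` and `R̄` is `R` (for `m` even)
or `R` with its middle component removed (for `m` odd). -/
theorem horizontal_mirror_zeroOne (m n : ℕ) (R : Fin m → ℕ) (S : Fin n → ℕ)
    (hsum : ∑ i, R i = ∑ j, S j) :
    (∃ A : Matrix (Fin m) (Fin n) ℕ,
        (∀ i j, A i j = 0 ∨ A i j = 1) ∧
        (∀ i, ∑ j, A i j = R i) ∧
        (∀ j, ∑ i, A i j = S j) ∧
        (∀ i j, A i j = A i.rev j)) ↔
      ((∀ i, R i = R i.rev) ∧
        (m % 2 = 0 → ∀ j, S j % 2 = 0) ∧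
        (∀ hm : m % 2 = 1,
          (Finset.univ.filter fun j => S j % 2 = 1).card ≤ R ⟨m / 2, by omega⟩) ∧
        MajorizedBy
          (vecMS (fun j => S j - S j % 2))
          (conjMS (if hm : m % 2 = 1 then (vecMS R).erase (R ⟨m / 2, by omega⟩)
            else vecMS R))) := by
  constructor
  · rintro ⟨A, h01, hrow, hcol, hsym⟩
    have hpal : ∀ i, R i = R i.rev := fun i => by
      rw [← hrow i, ← hrow i.rev]
      exact sum_congr rfl fun j _ => hsym i j
    have hGR := (zeroOneRealizable_topHalf_of_symmetric h01 hrow hcol hsym).galeRyserCondition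
    obtain ⟨heven, hodd⟩ := parity_conditions_of_sum_mod_two_eq_centerTerm
      (sum_mod_two_eq_centerTerm hpal hsum hGR.1)
    exact ⟨hpal, heven, fun hm => (hodd.trans (dif_pos hm)).le,
      (majorizedBy_iff_galeRyserCondition hpal).2 hGR⟩
  · rintro ⟨hpal, -, -, hmaj⟩
    have hGR := (majorizedBy_iff_galeRyserCondition hpal).1 hmaj
    exact exists_symmetric_of_zeroOneRealizable_topHalf hpal hGR.zeroOneRealizable
      (sum_mod_two_eq_centerTerm hpal hsum hGR.1)
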